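/- arXiv:1101.3453 — 3 statements merged into one kernel-verified Lean document; each statement's English description precedes it below -/
import Mathlib

section
/- For partitions X and Y of a finite set, X is refined by Y (every block of Y is contained in a block of X) if and only if for every probability distribution μ on the set and every natural number n, the expected probability of guessing the secret in n tries given X is at most that given Y, where the expected probability of guessing in n tries given a partition is the sum over blocks of the n largest element-probabilities in that block. -/
open Finset

variable {σ : Type*} [Fintype σ] [DecidableEq σ]

/-- A probability distribution on a finite type. -/
def IsDist (μ : σ → ℝ) : Prop := (∀ x, 0 ≤ μ x) ∧ ∑ x, μ x = 1

/-- `Refines X Y` : `X ⊑ Y`, i.e. every block of `Y` is contained in some block of `X`. -/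
def Refines (X Y : Finpartition (univ : Finset σ)) : Prop :=
  ∀ B ∈ Y.parts, ∃ C ∈ X.parts, B ⊆ C

/-- The common refinement (the paper's join `X ⊔ Y`). -/
def pJoin (X Y : Finpartition (univ : Finset σ)) : Finpartition (univ : Finset σ) := X ⊓ Y

/-- The setoid associated to a finpartition. -/
def toSetoid (X : Finpartition (univ : Finset σ)) : Setoid σ where
  r x y := ∃ B ∈ X.parts, x ∈ B ∧ y ∈ B
  iseqv := by
    constructor
    · intro x
      obtain ⟨B, hB, hx⟩ := X.exists_mem (mem_univ x)
      exact ⟨B, hB, hx, hx⟩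
    · rintro x y ⟨B, hB, hx, hy⟩; exact ⟨B, hB, hy, hx⟩
    · rintro x y z ⟨B, hB, hx, hy⟩ ⟨C, hC, hy', hz⟩
      exact ⟨B, hB, hx, X.eq_of_mem_parts hC hB hy' hy ▸ hz⟩

/-- The coarsest common coarsening (the paper's meet `X ⊓ Y`). -/
noncomputable def pMeet (X Y : Finpartition (univ : Finset σ)) : Finpartition (univ : Finset σ) :=
  letI : DecidableRel (toSetoid X ⊔ toSetoid Y).r := Classical.decRel _
  Finpartition.ofSetoid (toSetoid X ⊔ toSetoid Y)

/-- Sum of the `n` largest `μ`-probabilities among the elements of `B`. -/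
def gGuess (μ : σ → ℝ) (n : ℕ) (B : Finset σ) : ℝ :=
  (B.powerset.filter fun S => S.card ≤ n).sup' ⟨∅, by simp⟩ fun S => ∑ x ∈ S, μ x

/-- Expected probability of guessing in `n` tries given partition `X`. -/
def GGuess (μ : σ → ℝ) (n : ℕ) (X : Finpartition (univ : Finset σ)) : ℝ :=
  ∑ B ∈ X.parts, gGuess μ n B

/-- Expected number of guesses for a block `B` (elements asked in order of
decreasing probability, i.e. the ordering minimising the expected rank). -/
noncomputable def NGset (μ : σ → ℝ) (B : Finset σ) : ℝ :=
  ⨅ e : B ≃ Fin B.card, ∑ x ∈ B.attach, ((e x : ℕ) + 1 : ℝ) * μ x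

/-- Expected number of guesses given a partition. -/
noncomputable def NGpart (μ : σ → ℝ) (X : Finpartition (univ : Finset σ)) : ℝ :=
  ∑ B ∈ X.parts, NGset μ B

/-- Shannon entropy (base 2) of the block distribution induced by `μ` on `X`. -/
noncomputable def entropy (μ : σ → ℝ) (X : Finpartition (univ : Finset σ)) : ℝ :=
  - ∑ B ∈ X.parts, (∑ x ∈ B, μ x) * Real.logb 2 (∑ x ∈ B, μ x)

/-- Conditional entropy `H(X|Y) = H(X ⊔ Y) - H(Y)`. -/
noncomputable def condEntropy (μ : σ → ℝ) (X Y : Finpartition (univ : Finset σ)) : ℝ :=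
  entropy μ (pJoin X Y) - entropy μ Y

/-- Mutual information `I(X;Y) = H(X) + H(Y) - H(X ⊔ Y)`. -/
noncomputable def mutualInfo (μ : σ → ℝ) (X Y : Finpartition (univ : Finset σ)) : ℝ :=
  entropy μ X + entropy μ Y - entropy μ (pJoin X Y)

/-- Maximum probability in a block. -/
noncomputable def fmax (μ : σ → ℝ) (B : Finset σ) : ℝ := ((B.image μ).max).unbotD 0

/-- Min-entropy leakage of a partition. -/
noncomputable def MEleak (μ : σ → ℝ) (X : Finpartition (univ : Finset σ)) : ℝ :=
  Real.logb 2 (∑ B ∈ X.parts, fmax μ B) - Real.logb 2 (fmax μ (univ : Finset σ))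

/-- Kernel partition of a function on a finite type. -/
def kerP {O : Type*} [DecidableEq O] (f : σ → O) : Finpartition (univ : Finset σ) :=
  letI : DecidableRel (Setoid.ker f).r := fun a b => decEq (f a) (f b)
  Finpartition.ofSetoid (Setoid.ker f)

/-! A coarser partition can only lose guessing power: the `n` best guesses in a block `C` of `X`
split into at most `n` guesses in each block of `Y` inside `C`. Conversely, if some block of `Y`
meets two blocks `X.part x ≠ X.part y`, the uniform distribution on `{x, y}` gives
`GGuess μ 1 X ≥ 1 > 1/2 ≥ GGuess μ 1 Y`. -/

namespace Finpartition

variable {α : Type*} [DecidableEq α] {s : Finset α}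

theorem sum_parts_eq_sum_sum_filter_subset {M : Type*} [AddCommMonoid M] {P Q : Finpartition s}
    (h : P ≤ Q) (f : Finset α → M) :
    ∑ p ∈ P.parts, f p = ∑ q ∈ Q.parts, ∑ p ∈ P.parts with p ⊆ q, f p := by
  have hcover : P.parts = Q.parts.biUnion fun q => {p ∈ P.parts | p ⊆ q} := by
    ext p
    simp only [mem_biUnion, mem_filter]
    exact ⟨fun hp => (h hp).imp fun q hq => ⟨hq.1, hp, hq.2⟩, fun ⟨_, _, hp, _⟩ => hp⟩
  have hdisj : (Q.parts : Set (Finset α)).PairwiseDisjoint fun q => {p ∈ P.parts | p ⊆ q} := by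
    intro q hq q' hq' hne
    refine disjoint_filter.2 fun p hp hpq hpq' => hne ?_
    obtain ⟨a, ha⟩ := P.nonempty_of_mem_parts hp
    exact Q.eq_of_mem_parts hq hq' (hpq ha) (hpq' ha)
  rw [← sum_biUnion hdisj, ← hcover]

theorem subset_sup_filter_subset {P Q : Finpartition s} (h : P ≤ Q) {q : Finset α}
    (hq : q ∈ Q.parts) : q ⊆ {p ∈ P.parts | p ⊆ q}.sup id := by
  intro a ha
  have has : a ∈ s := Q.le hq ha
  obtain ⟨q', hq', hpq'⟩ := h (P.part_mem.2 has)
  have hq'q : q' = q := Q.eq_of_mem_parts hq' hq (hpq' (P.mem_part_self.2 has)) ha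
  refine mem_sup.2 ⟨P.part a, mem_filter.2 ⟨P.part_mem.2 has, hq'q ▸ hpq'⟩, ?_⟩
  exact P.mem_part_self.2 has

theorem exists_mem_part_notMem_part_of_not_le {P Q : Finpartition s} (h : ¬ P ≤ Q) :
    ∃ a b, b ∈ P.part a ∧ b ∉ Q.part a := by
  by_contra! hPQ
  refine h fun p hp => ?_
  obtain ⟨a, ha⟩ := P.nonempty_of_mem_parts hp
  have has : a ∈ s := P.le hp ha
  refine ⟨Q.part a, Q.part_mem.2 has, fun b hb => hPQ a b ?_⟩
  rwa [P.part_eq_of_mem hp ha]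

end Finpartition

theorem refines_iff_le {X Y : Finpartition (univ : Finset σ)} : Refines X Y ↔ Y ≤ X :=
  Iff.rfl

section gGuess

variable {α : Type*} {μ : α → ℝ} {n : ℕ}

theorem sum_le_gGuess {B S : Finset α} (hSB : S ⊆ B) (hS : S.card ≤ n) :
    ∑ x ∈ S, μ x ≤ gGuess μ n B :=
  le_sup' (fun S => ∑ x ∈ S, μ x) (mem_filter.2 ⟨mem_powerset.2 hSB, hS⟩)

theorem gGuess_le {B : Finset α} {a : ℝ} (h : ∀ S ⊆ B, S.card ≤ n → ∑ x ∈ S, μ x ≤ a) :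
    gGuess μ n B ≤ a :=
  sup'_le _ _ fun S hS => h S (mem_powerset.1 (mem_filter.1 hS).1) (mem_filter.1 hS).2

theorem gGuess_nonneg (B : Finset α) : 0 ≤ gGuess μ n B := by
  simpa using sum_le_gGuess (μ := μ) (empty_subset B) (Nat.zero_le n)

theorem le_gGuess_of_mem {B : Finset α} {x : α} (hx : x ∈ B) (hn : n ≠ 0) :
    μ x ≤ gGuess μ n B := by
  simpa using sum_le_gGuess (μ := μ) (singleton_subset_iff.2 hx) (Nat.one_le_iff_ne_zero.2 hn)

theorem gGuess_le_mul {B : Finset α} {a : ℝ} (ha : 0 ≤ a) (hB : ∀ x ∈ B, μ x ≤ a) :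
    gGuess μ n B ≤ n * a :=
  gGuess_le fun S hSB hS => calc
    ∑ x ∈ S, μ x ≤ S.card * a := by
      simpa using sum_le_card_nsmul S μ a fun x hx => hB x (hSB hx)
    _ ≤ n * a := by gcongr

theorem gGuess_empty : gGuess μ n ∅ = 0 :=
  le_antisymm (gGuess_le fun S hS _ => by simp [subset_empty.1 hS]) (gGuess_nonneg ∅)

theorem gGuess_mono {B C : Finset α} (h : B ⊆ C) : gGuess μ n B ≤ gGuess μ n C :=
  gGuess_le fun _ hSB hS => sum_le_gGuess (hSB.trans h) hS

theorem gGuess_union_le [DecidableEq α] (B C : Finset α) :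
    gGuess μ n (B ∪ C) ≤ gGuess μ n B + gGuess μ n C := by
  refine gGuess_le fun S hS hSn => ?_
  rw [← sum_inter_add_sum_sdiff S B]
  gcongr
  · exact sum_le_gGuess inter_subset_right ((card_le_card inter_subset_left).trans hSn)
  · refine sum_le_gGuess (fun x hx => ?_) ((card_le_card sdiff_subset).trans hSn)
    obtain ⟨hxS, hxB⟩ := mem_sdiff.1 hx
    exact (mem_union.1 (hS hxS)).resolve_left hxB

theorem gGuess_sup_le_sum [DecidableEq α] (𝒜 : Finset (Finset α)) :
    gGuess μ n (𝒜.sup id) ≤ ∑ B ∈ 𝒜, gGuess μ n B := by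
  induction 𝒜 using Finset.induction_on with
  | empty => simp [gGuess_empty]
  | insert B 𝒜 hB ih =>
    rw [sup_insert, sum_insert hB]
    exact (gGuess_union_le _ _).trans (by simpa using ih)

end gGuess

section GGuess

variable {μ : σ → ℝ} {n : ℕ}

theorem GGuess_anti {X Y : Finpartition (univ : Finset σ)} (h : Y ≤ X) :
    GGuess μ n X ≤ GGuess μ n Y := by
  rw [GGuess, GGuess, Y.sum_parts_eq_sum_sum_filter_subset h]
  exact sum_le_sum fun C hC =>
    (gGuess_mono (Y.subset_sup_filter_subset h hC)).trans (gGuess_sup_le_sum _)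

theorem add_le_GGuess {X : Finpartition (univ : Finset σ)} (hn : n ≠ 0)
    {x y : σ} (hxy : X.part x ≠ X.part y) : μ x + μ y ≤ GGuess μ n X := calc
  μ x + μ y ≤ gGuess μ n (X.part x) + gGuess μ n (X.part y) := by
    gcongr <;> exact le_gGuess_of_mem (X.mem_part_self.2 (mem_univ _)) hn
  _ ≤ GGuess μ n X :=
    add_le_sum (fun _ _ => gGuess_nonneg _) (X.part_mem.2 (mem_univ x))
      (X.part_mem.2 (mem_univ y)) hxy

theorem GGuess_eq_gGuess_of_support_subset {Y : Finpartition (univ : Finset σ)}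
    {B : Finset σ} (hB : B ∈ Y.parts) (hμ : ∀ z ∉ B, μ z = 0) : GGuess μ n Y = gGuess μ n B := by
  refine sum_eq_single_of_mem B hB fun D hD hDB => le_antisymm ?_ (gGuess_nonneg D)
  simpa using gGuess_le_mul (n := n) le_rfl fun z hz =>
    (hμ z fun hzB => hDB (Y.eq_of_mem_parts hD hB hz hzB)).le

end GGuess

theorem isDist_uniformOn {T : Finset σ} (hT : T.Nonempty) :
    IsDist fun z => if z ∈ T then (T.card : ℝ)⁻¹ else 0 := by
  refine ⟨fun z => by positivity, ?_⟩
  rw [sum_ite_mem, univ_inter, sum_const, nsmul_eq_mul]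
  exact mul_inv_cancel₀ (Nat.cast_ne_zero.2 hT.card_ne_zero)

theorem refines_iff_forall_guess_le (X Y : Finpartition (univ : Finset σ)) :
    Refines X Y ↔ ∀ μ : σ → ℝ, IsDist μ → ∀ n : ℕ, GGuess μ n X ≤ GGuess μ n Y := by
  refine ⟨fun h _ _ _ => GGuess_anti (refines_iff_le.1 h), fun h => ?_⟩
  by_contra hXY
  obtain ⟨x, y, hyx, hyX⟩ := Y.exists_mem_part_notMem_part_of_not_le (mt refines_iff_le.2 hXY)
  have hxy : x ≠ y := fun hxy => hyX (hxy ▸ X.mem_part_self.2 (mem_univ x))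
  have hXxy : X.part x ≠ X.part y := fun he => hyX (he ▸ X.mem_part_self.2 (mem_univ y))
  set μ : σ → ℝ := fun z => if z ∈ ({x, y} : Finset σ) then ((card {x, y} : ℕ) : ℝ)⁻¹ else 0
  have hμ : IsDist μ := isDist_uniformOn (insert_nonempty x {y})
  have hμx : μ x = 1 / 2 := by simp [μ, card_pair hxy]
  have hμy : μ y = 1 / 2 := by simp [μ, card_pair hxy]
  have hY : GGuess μ 1 Y ≤ 1 / 2 := by
    have hsupp : ∀ z ∉ Y.part x, μ z = 0 := fun z hz => by
      have hzx : z ≠ x := by rintro rfl; exact hz (Y.mem_part_self.2 (mem_univ z))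
      have hzy : z ≠ y := by rintro rfl; exact hz hyx
      simp [μ, hzx, hzy]
    rw [GGuess_eq_gGuess_of_support_subset (Y.part_mem.2 (mem_univ x)) hsupp]
    simpa using gGuess_le_mul (n := 1) (by norm_num) fun z _ => show μ z ≤ 1 / 2 by
      simp only [μ, card_pair hxy]; split_ifs <;> norm_num
  linarith [h μ hμ 1, add_le_GGuess (μ := μ) one_ne_zero hXxy]
end

section
/- For partitions X and Y of a finite set, X is refined by Y if and only if for every probability distribution μ, the expected probability of guessing the secret in one try given X is at most that given Y. -/
open Finset

variable {σ : Type*} [Fintype σ] [DecidableEq σ]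

/-! For nonnegative weights the one-guess gain of a block is its largest probability. If `X ⊑ Y`,
every block of `X` is a union of blocks of `Y`, and the maximum over a union is at most the sum of
the maxima over its pieces. Conversely, if a block of `Y` meets two blocks of `X`, at `x` and `y`,
then for the uniform distribution on `{x, y}` the gain is `1` given `X` but only `1/2` given `Y`. -/

section OneGuess

omit [Fintype σ] [DecidableEq σ]

variable (μ : σ → ℝ) {B : Finset σ}

lemma gGuess_one_nonneg (B : Finset σ) : 0 ≤ gGuess μ 1 B :=
  le_sup'_of_le _ (b := ∅) (by simp) (by simp)

lemma le_gGuess_one {x : σ} (hx : x ∈ B) : μ x ≤ gGuess μ 1 B :=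
  le_sup'_of_le _ (b := {x}) (by simpa using hx) (by simp)

lemma gGuess_one_le {r : ℝ} (hr : 0 ≤ r) (h : ∀ x ∈ B, μ x ≤ r) : gGuess μ 1 B ≤ r := by
  refine sup'_le _ _ fun S hS => ?_
  obtain ⟨hSB, hS⟩ := mem_filter.1 hS
  rcases Nat.le_one_iff_eq_zero_or_eq_one.1 hS with h0 | h1
  · simpa [card_eq_zero.1 h0] using hr
  · obtain ⟨x, rfl⟩ := card_eq_one.1 h1
    simpa using h x (mem_powerset.1 hSB (mem_singleton_self x))

end OneGuess

section Partitions

variable {X Y : Finpartition (univ : Finset σ)}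

lemma Refines.subset_part (h : Refines X Y) {B : Finset σ} (hB : B ∈ Y.parts) {y : σ}
    (hy : y ∈ B) : B ⊆ X.part y := by
  obtain ⟨C, hC, hBC⟩ := h B hB
  rwa [X.part_eq_of_mem hC (hBC hy)]

lemma Refines.sum_sum_parts_subset {M : Type*} [AddCommMonoid M] (h : Refines X Y)
    (f : Finset σ → M) : ∑ C ∈ X.parts, ∑ B ∈ Y.parts with B ⊆ C, f B = ∑ B ∈ Y.parts, f B := by
  rw [sum_comm' (t' := Y.parts) (s' := fun B => X.parts.filter (B ⊆ ·)) (by simp only [mem_filter]; tauto)]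
  refine sum_congr rfl fun B hB => ?_
  obtain ⟨y, hy⟩ := Y.nonempty_of_mem_parts hB
  have hsingle : X.parts.filter (B ⊆ ·) = {X.part y} := by
    ext C
    simp only [mem_filter, mem_singleton]
    refine ⟨fun ⟨hC, hBC⟩ => (X.part_eq_of_mem hC (hBC hy)).symm, ?_⟩
    rintro rfl
    exact ⟨X.part_mem.2 (mem_univ y), h.subset_part hB hy⟩
  rw [hsingle, sum_singleton]

lemma exists_part_ne_of_not_refines (h : ¬ Refines X Y) :
    ∃ B ∈ Y.parts, ∃ x ∈ B, ∃ y ∈ B, X.part x ≠ X.part y := by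
  simp only [Refines, not_forall, not_exists, not_and] at h
  obtain ⟨B, hB, hBX⟩ := h
  obtain ⟨x, hx⟩ := Y.nonempty_of_mem_parts hB
  obtain ⟨y, hy, hyx⟩ := not_subset.1 (hBX _ (X.part_mem.2 (mem_univ x)))
  exact ⟨B, hB, x, hx, y, hy, fun hxy => hyx (hxy ▸ X.mem_part (mem_univ y))⟩

end Partitions

section GuessingGain

variable (μ : σ → ℝ) {X Y : Finpartition (univ : Finset σ)}

lemma Refines.GGuess_one_le (h : Refines X Y) : GGuess μ 1 X ≤ GGuess μ 1 Y := by
  calc GGuess μ 1 X ≤ ∑ C ∈ X.parts, ∑ B ∈ Y.parts with B ⊆ C, gGuess μ 1 B := by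
        refine sum_le_sum fun C hC => gGuess_one_le μ
          (sum_nonneg fun B _ => gGuess_one_nonneg μ B) fun x hx => ?_
        have hxY : Y.part x ∈ Y.parts := Y.part_mem.2 (mem_univ x)
        have hYX : Y.part x ⊆ C :=
          X.part_eq_of_mem hC hx ▸ h.subset_part hxY (Y.mem_part (mem_univ x))
        exact (le_gGuess_one μ (Y.mem_part (mem_univ x))).trans <|
          single_le_sum (fun B _ => gGuess_one_nonneg μ B) (mem_filter.2 ⟨hxY, hYX⟩)
    _ = GGuess μ 1 Y := h.sum_sum_parts_subset _

lemma add_le_GGuess_one {x y : σ} (hxy : X.part x ≠ X.part y) :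
    μ x + μ y ≤ GGuess μ 1 X :=
  calc μ x + μ y ≤ gGuess μ 1 (X.part x) + gGuess μ 1 (X.part y) :=
        add_le_add (le_gGuess_one μ (X.mem_part (mem_univ x)))
          (le_gGuess_one μ (X.mem_part (mem_univ y)))
    _ = ∑ C ∈ {X.part x, X.part y}, gGuess μ 1 C := (sum_pair hxy).symm
    _ ≤ GGuess μ 1 X := sum_le_sum_of_subset_of_nonneg
        (by simp [insert_subset_iff, X.part_mem]) fun C _ _ => gGuess_one_nonneg μ C

lemma GGuess_one_le_of_support_subset {B : Finset σ} (hB : B ∈ Y.parts) {r : ℝ} (hr : 0 ≤ r)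
    (hμB : ∀ z ∈ B, μ z ≤ r) (hμ : ∀ z ∉ B, μ z = 0) : GGuess μ 1 Y ≤ r :=
  calc GGuess μ 1 Y = gGuess μ 1 B := by
        refine sum_eq_single_of_mem B hB fun C hC hCB => le_antisymm ?_ (gGuess_one_nonneg μ C)
        exact gGuess_one_le μ le_rfl fun z hzC =>
          (hμ z fun hzB => hCB (Y.eq_of_mem_parts hC hB hzC hzB)).le
    _ ≤ r := gGuess_one_le μ hr hμB

end GuessingGain

noncomputable def uniformDist (S : Finset σ) (z : σ) : ℝ := if z ∈ S then (#S : ℝ)⁻¹ else 0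

omit [Fintype σ] in
lemma uniformDist_le_inv_card (S : Finset σ) (z : σ) : uniformDist S z ≤ (#S : ℝ)⁻¹ := by
  unfold uniformDist
  split_ifs <;> simp

lemma isDist_uniformDist {S : Finset σ} (hS : S.Nonempty) : IsDist (uniformDist S) := by
  refine ⟨fun z => by unfold uniformDist; split_ifs <;> positivity, ?_⟩
  simp [uniformDist, sum_ite_mem, hS.card_ne_zero]

theorem refines_iff_forall_one_guess_le (X Y : Finpartition (univ : Finset σ)) :
    Refines X Y ↔ ∀ μ : σ → ℝ, IsDist μ → GGuess μ 1 X ≤ GGuess μ 1 Y := by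
  refine ⟨fun h μ _ => h.GGuess_one_le μ, fun h => by_contra fun hXY => ?_⟩
  obtain ⟨B, hB, x, hx, y, hy, hxy⟩ := exists_part_ne_of_not_refines hXY
  set S : Finset σ := {x, y}
  have hSB : S ⊆ B := insert_subset hx (singleton_subset_iff.2 hy)
  have hc : 0 < (#S : ℝ)⁻¹ := by positivity
  have hμx : uniformDist S x = (#S : ℝ)⁻¹ := if_pos (mem_insert_self x {y})
  have hμy : uniformDist S y = (#S : ℝ)⁻¹ := if_pos (mem_insert_of_mem (mem_singleton_self y))
  have hX := add_le_GGuess_one (uniformDist S) hxy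
  have hXY := h _ (isDist_uniformDist (insert_nonempty x {y}))
  have hY := GGuess_one_le_of_support_subset (uniformDist S) hB hc.le
    (fun z _ => uniformDist_le_inv_card S z)
    (fun z hz => if_neg fun hzS => hz (hSB hzS))
  linarith
end

section
/- For partitions X and Y of a finite set, X is refined by Y if and only if for every probability distribution μ, the expected number of guesses needed to guess the secret given Y is at most that given X. -/
/-!
A guessing order for a block `B` is the same as a labelling `r : σ → ℕ` injective on `B`
(guess `x` at attempt `r x + 1`); gaps in the labels only cost more, so `NGset μ B` is the least
value of `∑ x ∈ B, (r x + 1) μ x`, and `NGpart μ X` the least value of `∑ x, (r x + 1) μ x` over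
labellings injective on every block of `X`. If `Y` refines `X`, each labelling admissible for `X`
is admissible for `Y`, whence `NGpart μ Y ≤ NGpart μ X`. Conversely, if `a ≠ b` share a block of
`Y` but no block of `X`, the uniform distribution on `{a, b}` costs `3/2` guesses given `Y` and
only `1` given `X`.
-/

open Finset

variable {σ : Type*} [Fintype σ] [DecidableEq σ]

section Ranking

variable {α : Type*}

theorem Fin.val_le_of_strictMono {n : ℕ} {g : Fin n → ℕ} (hg : StrictMono g) (i : Fin n) :
    (i : ℕ) ≤ g i :=
  calc (i : ℕ) = #(Iio i) := (Fin.card_Iio i).symm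
    _ ≤ #(range (g i)) :=
      card_le_card_of_injOn g (fun _ hj => mem_range.2 (hg (mem_Iio.1 hj))) hg.injective.injOn
    _ = g i := card_range _

/-- Listing `B` in increasing order of `r` ranks each element no later than its label. -/
theorem Finset.exists_equiv_fin_le_of_injOn {B : Finset α} {r : α → ℕ} (hr : Set.InjOn r B) :
    ∃ e : B ≃ Fin #B, ∀ x : B, (e x : ℕ) ≤ r x := by
  classical
  let ι := (B.image r).orderIsoOfFin (card_image_of_injOn hr)
  let f : B → Fin #B := fun x => ι.symm ⟨r x, mem_image_of_mem r x.2⟩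
  have hf : Function.Injective f := fun x y hxy =>
    Subtype.ext (hr x.2 y.2 (congrArg Subtype.val (ι.symm.injective hxy)))
  refine ⟨.ofBijective f ((Fintype.bijective_iff_injective_and_card f).2 ⟨hf, by simp⟩), fun x => ?_⟩
  have hι : StrictMono fun i => (ι i : ℕ) := fun _ _ hij => ι.strictMono hij
  simpa [f] using Fin.val_le_of_strictMono hι (f x)

theorem NGset_le_sum_of_injOn {μ : α → ℝ} (hμ : 0 ≤ μ) {B : Finset α} {r : α → ℕ}
    (hr : Set.InjOn r B) : NGset μ B ≤ ∑ x ∈ B, ((r x : ℝ) + 1) * μ x := by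
  obtain ⟨e, he⟩ := exists_equiv_fin_le_of_injOn hr
  calc NGset μ B ≤ ∑ x ∈ B.attach, ((e x : ℕ) + 1 : ℝ) * μ x := ciInf_le (Finite.bddBelow_range _) e
    _ ≤ ∑ x ∈ B.attach, ((r x : ℝ) + 1) * μ x := by
      gcongr with x
      · exact hμ x
      · exact_mod_cast he x
    _ = ∑ x ∈ B, ((r x : ℝ) + 1) * μ x := sum_attach B fun x => ((r x : ℝ) + 1) * μ x

theorem exists_injOn_sum_eq_NGset (μ : α → ℝ) (B : Finset α) :
    ∃ r : α → ℕ, Set.InjOn r B ∧ ∑ x ∈ B, ((r x : ℝ) + 1) * μ x = NGset μ B := by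
  classical
  have : Nonempty (B ≃ Fin #B) := ⟨B.equivFin⟩
  obtain ⟨e, he⟩ := exists_eq_ciInf_of_finite
    (f := fun e : B ≃ Fin #B => ∑ x ∈ B.attach, ((e x : ℕ) + 1 : ℝ) * μ x)
  let r : α → ℕ := fun x => if h : x ∈ B then e ⟨x, h⟩ else 0
  refine ⟨r, fun x hx y hy hxy => ?_, ?_⟩
  · have h : e ⟨x, hx⟩ = e ⟨y, hy⟩ := by
      simpa only [r, dif_pos (mem_coe.1 hx), dif_pos (mem_coe.1 hy), Fin.val_inj] using hxy
    exact congrArg Subtype.val (e.injective h)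
  · rw [NGset, ← he, ← sum_attach B]
    exact sum_congr rfl fun x _ => by simp [r]

end Ranking

namespace Finpartition

variable {α : Type*} [DecidableEq α] {s : Finset α} (P : Finpartition s)

theorem sum_parts_sum {M : Type*} [AddCommMonoid M] (f : α → M) :
    ∑ B ∈ P.parts, ∑ x ∈ B, f x = ∑ x ∈ s, f x := by
  have h := sum_biUnion (f := f) P.disjoint
  rw [P.biUnion_parts] at h
  exact h.symm

theorem sum_NGset_le_of_injOn {μ : α → ℝ} (hμ : 0 ≤ μ) {r : α → ℕ}
    (hr : ∀ B ∈ P.parts, Set.InjOn r B) :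
    ∑ B ∈ P.parts, NGset μ B ≤ ∑ x ∈ s, ((r x : ℝ) + 1) * μ x :=
  (sum_le_sum fun B hB => NGset_le_sum_of_injOn hμ (hr B hB)).trans_eq (P.sum_parts_sum _)

theorem exists_injOn_sum_eq_sum_NGset (μ : α → ℝ) :
    ∃ r : α → ℕ, (∀ B ∈ P.parts, Set.InjOn r B) ∧
      ∑ x ∈ s, ((r x : ℝ) + 1) * μ x = ∑ B ∈ P.parts, NGset μ B := by
  choose ρ hρinj hρsum using fun B : Finset α => exists_injOn_sum_eq_NGset μ B
  have hpart : ∀ B ∈ P.parts, ∀ x ∈ B, ρ (P.part x) x = ρ B x := fun B hB x hx => by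
    rw [P.part_eq_of_mem hB hx]
  refine ⟨fun x => ρ (P.part x) x, fun B hB => ?_, ?_⟩
  · exact (hρinj B).congr fun x hx => (hpart B hB x hx).symm
  · rw [← P.sum_parts_sum]
    refine sum_congr rfl fun B hB => ?_
    rw [← hρsum B]
    exact sum_congr rfl fun x hx => by simp only [hpart B hB x hx]

end Finpartition

theorem NGpart_le_of_refines {X Y : Finpartition (univ : Finset σ)} (hXY : Refines X Y)
    {μ : σ → ℝ} (hμ : 0 ≤ μ) : NGpart μ Y ≤ NGpart μ X := by
  obtain ⟨r, hr, hsum⟩ := X.exists_injOn_sum_eq_sum_NGset μ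
  refine (Y.sum_NGset_le_of_injOn hμ fun B hB => ?_).trans hsum.le
  obtain ⟨C, hC, hBC⟩ := hXY B hB
  exact (hr C hC).mono (coe_subset.2 hBC)

theorem exists_separated_of_not_refines {X Y : Finpartition (univ : Finset σ)}
    (h : ¬ Refines X Y) : ∃ B ∈ Y.parts, ∃ a ∈ B, ∃ b ∈ B, ∀ C ∈ X.parts, a ∈ C → b ∉ C := by
  simp only [Refines, not_forall, not_exists, not_and] at h
  obtain ⟨B, hB, hBX⟩ := h
  obtain ⟨a, ha⟩ := Y.nonempty_of_mem_parts hB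
  obtain ⟨C, hC, haC⟩ := X.exists_mem (mem_univ a)
  obtain ⟨b, hb, hbC⟩ := not_subset.1 (hBX C hC)
  exact ⟨B, hB, a, ha, b, hb, fun C' hC' haC' => X.eq_of_mem_parts hC hC' haC haC' ▸ hbC⟩

theorem Finpartition.exists_injOn_parts_eq_zero {s : Finset σ} (X : Finpartition s) {a b : σ}
    (hsep : ∀ C ∈ X.parts, a ∈ C → b ∉ C) :
    ∃ r : σ → ℕ, (∀ C ∈ X.parts, Set.InjOn r C) ∧ r a = 0 ∧ r b = 0 := by
  let e := Fintype.equivFin σ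
  refine ⟨fun x => if x = a ∨ x = b then 0 else e x + 1, fun C hC x hx y hy hxy => ?_,
    by simp, by simp⟩
  simp only at hxy
  split_ifs at hxy with hxab hyab
  · rcases hxab with rfl | rfl <;> rcases hyab with rfl | rfl
    all_goals first | rfl | exact absurd hy (hsep C hC hx) | exact absurd hx (hsep C hC hy)
  · exact e.injective (Fin.ext (by omega))

noncomputable def uniformOnPair (a b : σ) : σ → ℝ := fun x => if x = a ∨ x = b then 1 / 2 else 0

theorem sum_mul_uniformOnPair {a b : σ} (hab : a ≠ b) (f : σ → ℝ) :
    ∑ x, f x * uniformOnPair a b x = (f a + f b) / 2 := by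
  rw [Fintype.sum_eq_add a b hab fun x hx => by simp [uniformOnPair, hx.1, hx.2]]
  simp [uniformOnPair, hab.symm]
  ring

theorem isDist_uniformOnPair {a b : σ} (hab : a ≠ b) : IsDist (uniformOnPair a b) := by
  refine ⟨fun x => ?_, by simpa using sum_mul_uniformOnPair hab 1⟩
  unfold uniformOnPair
  split_ifs <;> norm_num

theorem exists_isDist_NGpart_lt_of_not_refines {X Y : Finpartition (univ : Finset σ)}
    (h : ¬ Refines X Y) : ∃ μ : σ → ℝ, IsDist μ ∧ NGpart μ X < NGpart μ Y := by
  obtain ⟨B, hB, a, ha, b, hb, hsep⟩ := exists_separated_of_not_refines h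
  obtain ⟨C, hC, haC⟩ := X.exists_mem (mem_univ a)
  have hab : a ≠ b := fun h => hsep C hC haC (h ▸ haC)
  set μ := uniformOnPair a b
  refine ⟨μ, isDist_uniformOnPair hab, ?_⟩
  obtain ⟨r, hr, hra, hrb⟩ := X.exists_injOn_parts_eq_zero hsep
  obtain ⟨ρ, hρ, hρsum⟩ := Y.exists_injOn_sum_eq_sum_NGset μ
  have hρab : (1 : ℝ) ≤ ρ a + ρ b := by
    have : ρ a ≠ ρ b := fun h => hab (hρ B hB ha hb h)
    exact_mod_cast (by omega : 1 ≤ ρ a + ρ b)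
  calc NGpart μ X ≤ ∑ x, ((r x : ℝ) + 1) * μ x :=
        X.sum_NGset_le_of_injOn (isDist_uniformOnPair hab).1 hr
    _ = 1 := by rw [sum_mul_uniformOnPair hab, hra, hrb]; norm_num
    _ < ∑ x, ((ρ x : ℝ) + 1) * μ x := by rw [sum_mul_uniformOnPair hab]; linarith
    _ = NGpart μ Y := hρsum

theorem refines_iff_forall_expected_guesses_ge (X Y : Finpartition (univ : Finset σ)) :
    Refines X Y ↔ ∀ μ : σ → ℝ, IsDist μ → NGpart μ Y ≤ NGpart μ X := by
  refine ⟨fun h μ hμ => NGpart_le_of_refines h hμ.1, fun h => by_contra fun hXY => ?_⟩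
  obtain ⟨μ, hμ, hlt⟩ := exists_isDist_NGpart_lt_of_not_refines hXY
  exact (h μ hμ).not_gt hlt
end
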